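/- arXiv:2209.15416 — 2 statements merged into one kernel-verified Lean document; each statement's English description precedes it below -/
import Mathlib

section
/- Let α be a probability measure on ℝⁿ and g ∈ ℝⁿ such that the 'tie sets' {x : x_i + g_i = x_j + g_j} have α-measure zero for all i ≠ j, and suppose α(L_i(g)) = p*_i for each i, where L_i(g) = {x : x_i + g_i ≥ x_k + g_k ∀k}. Then for any measurable allocation policy π (π(y_i|x) ≥ 0, Σ_i π(y_i|x) = 1) satisfying ∫ π(y_i|x) dα(x) = p*_i for all i, we have Σ_i ∫_{L_i(g)} x_i dα(x) ≥ Σ_i ∫ x_i π(y_i|x) dα(x). That is, the Laguerre-cell (shifted-greedy) policy maximizes expected welfare among all policies meeting the matching-distribution constraints. -/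
/-!
With `M x = maxᵢ (xᵢ + gᵢ)`, the greedy policy attains `M` pointwise, and the tie sets being
null makes the Laguerre cells an a.e. partition, so its welfare is `∫ M dα - ∑ᵢ gᵢ α(Lᵢ)`.
Any policy `π` averages the shifted utilities, `∑ᵢ (xᵢ + gᵢ) π(yᵢ|x) ≤ M x`, so its welfare is at
most `∫ M dα - ∑ᵢ gᵢ ∫ π(yᵢ|x) dα`. The matching constraints make the two correction terms equal.
-/

open MeasureTheory Finset

variable {ι : Type*}

def laguerreCell (g : ι → ℝ) (i : ι) : Set (ι → ℝ) := {x | ∀ k, x k + g k ≤ x i + g i}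

def shiftedMax [Fintype ι] [Nonempty ι] (g x : ι → ℝ) : ℝ :=
  univ.sup' univ_nonempty fun i => x i + g i

section shiftedMax

variable [Fintype ι] [Nonempty ι] (g : ι → ℝ)

theorem le_shiftedMax (x : ι → ℝ) (i : ι) : x i + g i ≤ shiftedMax g x :=
  le_sup' (fun k => x k + g k) (mem_univ i)

theorem shiftedMax_eq_of_mem_laguerreCell {x : ι → ℝ} {i : ι} (hx : x ∈ laguerreCell g i) :
    shiftedMax g x = x i + g i :=
  le_antisymm (sup'_le _ _ fun k _ => hx k) (le_shiftedMax g x i)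

theorem exists_mem_laguerreCell (x : ι → ℝ) : ∃ i, x ∈ laguerreCell g i := by
  obtain ⟨i, -, hi⟩ := exists_max_image univ (fun i => x i + g i) univ_nonempty
  exact ⟨i, fun k => hi k (mem_univ k)⟩

theorem iUnion_laguerreCell : ⋃ i, laguerreCell g i = Set.univ :=
  Set.eq_univ_of_forall fun x => Set.mem_iUnion.mpr (exists_mem_laguerreCell g x)

theorem abs_shiftedMax_le (x : ι → ℝ) : |shiftedMax g x| ≤ ∑ i, |x i + g i| := by
  obtain ⟨i, hi⟩ := exists_mem_laguerreCell g x
  rw [shiftedMax_eq_of_mem_laguerreCell g hi]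
  exact single_le_sum (f := fun j => |x j + g j|) (fun j _ => abs_nonneg _) (mem_univ i)

theorem sum_mul_le_shiftedMax_sub {w : ι → ℝ} (hw₀ : ∀ i, 0 ≤ w i) (hw₁ : ∑ i, w i = 1)
    (x : ι → ℝ) : ∑ i, x i * w i ≤ shiftedMax g x - ∑ i, g i * w i := by
  have : ∑ i, (x i + g i) * w i ≤ ∑ i, shiftedMax g x * w i :=
    sum_le_sum fun i _ => mul_le_mul_of_nonneg_right (le_shiftedMax g x i) (hw₀ i)
  rw [← mul_sum, hw₁, mul_one] at this
  simp only [add_mul, sum_add_distrib] at this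
  linarith

theorem measurable_shiftedMax : Measurable (shiftedMax g) := by
  have : shiftedMax g = univ.sup' univ_nonempty fun i (x : ι → ℝ) => x i + g i :=
    funext fun x => (Finset.sup'_apply univ_nonempty (fun i (y : ι → ℝ) => y i + g i) x).symm
  rw [this]
  exact measurable_sup' _ fun i _ => by fun_prop

theorem integrable_shiftedMax {α : Measure (ι → ℝ)} [IsFiniteMeasure α]
    (hint : ∀ i, Integrable (fun x => x i) α) : Integrable (shiftedMax g) α :=
  (integrable_finsetSum _ fun i _ => ((hint i).add (integrable_const (g i))).abs).mono'
    (measurable_shiftedMax g).aestronglyMeasurable (ae_of_all _ (abs_shiftedMax_le g))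

end shiftedMax

theorem measurableSet_laguerreCell [Finite ι] (g : ι → ℝ) (i : ι) :
    MeasurableSet (laguerreCell g i) := by
  simp only [laguerreCell, Set.ofPred_forall]
  exact .iInter fun k => measurableSet_le (by fun_prop) (by fun_prop)

theorem aedisjoint_laguerreCell {α : Measure (ι → ℝ)} {g : ι → ℝ} {i j : ι}
    (hties : α {x | x i + g i = x j + g j} = 0) :
    AEDisjoint α (laguerreCell g i) (laguerreCell g j) :=
  measure_mono_null (fun _ ⟨hxi, hxj⟩ => le_antisymm (hxj i) (hxi j)) hties

section greedy

variable [Fintype ι] [Nonempty ι] {α : Measure (ι → ℝ)} [IsFiniteMeasure α] {g : ι → ℝ}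

theorem integral_shiftedMax_eq_sum_setIntegral (hint : ∀ i, Integrable (fun x => x i) α)
    (hties : ∀ i j, i ≠ j → α {x | x i + g i = x j + g j} = 0) :
    ∫ x, shiftedMax g x ∂α = ∑ i, ∫ x in laguerreCell g i, shiftedMax g x ∂α := by
  have h := integral_iUnion_ae (fun i => (measurableSet_laguerreCell g i).nullMeasurableSet)
    (fun i j hij => aedisjoint_laguerreCell (hties i j hij))
    (integrable_shiftedMax g hint).integrableOn
  rwa [iUnion_laguerreCell, Measure.restrict_univ, tsum_fintype] at h

theorem setIntegral_laguerreCell (hint : ∀ i, Integrable (fun x => x i) α) (i : ι) :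
    ∫ x in laguerreCell g i, x i ∂α
      = ∫ x in laguerreCell g i, shiftedMax g x ∂α - g i * α.real (laguerreCell g i) := by
  rw [setIntegral_congr_fun (measurableSet_laguerreCell g i)
      fun x hx => shiftedMax_eq_of_mem_laguerreCell g hx,
    integral_add (hint i).integrableOn (integrable_const (g i)).integrableOn,
    setIntegral_const, smul_eq_mul]
  ring

theorem sum_setIntegral_laguerreCell (hint : ∀ i, Integrable (fun x => x i) α)
    (hties : ∀ i j, i ≠ j → α {x | x i + g i = x j + g j} = 0) :
    ∑ i, ∫ x in laguerreCell g i, x i ∂α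
      = ∫ x, shiftedMax g x ∂α - ∑ i, g i * α.real (laguerreCell g i) := by
  rw [integral_shiftedMax_eq_sum_setIntegral hint hties, ← sum_sub_distrib]
  exact sum_congr rfl fun i _ => setIntegral_laguerreCell hint i

theorem sum_integral_mul_le (hint : ∀ i, Integrable (fun x => x i) α) (π : (ι → ℝ) → ι → ℝ)
    (hπmeas : ∀ i, Measurable fun x => π x i) (hπnn : ∀ x i, 0 ≤ π x i)
    (hπsum : ∀ x, ∑ i, π x i = 1) :
    ∑ i, ∫ x, x i * π x i ∂α ≤ ∫ x, shiftedMax g x ∂α - ∑ i, g i * ∫ x, π x i ∂α := by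
  have hbound : ∀ i, ∀ᵐ x ∂α, ‖π x i‖ ≤ 1 := fun i => ae_of_all _ fun x => by
    rw [Real.norm_of_nonneg (hπnn x i), ← hπsum x]
    exact single_le_sum (fun j _ => hπnn x j) (mem_univ i)
  have hπint : ∀ i, Integrable (fun x => π x i) α := fun i =>
    .of_bound (hπmeas i).aestronglyMeasurable 1 (hbound i)
  have hmulint : ∀ i, Integrable (fun x => x i * π x i) α := fun i =>
    (hint i).mul_bdd (hπmeas i).aestronglyMeasurable (hbound i)
  have hgint : Integrable (fun x => ∑ i, g i * π x i) α :=
    integrable_finsetSum _ fun i _ => (hπint i).const_mul (g i)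
  calc ∑ i, ∫ x, x i * π x i ∂α = ∫ x, ∑ i, x i * π x i ∂α :=
        (integral_finsetSum _ fun i _ => hmulint i).symm
    _ ≤ ∫ x, (shiftedMax g x - ∑ i, g i * π x i) ∂α :=
        integral_mono (integrable_finsetSum _ fun i _ => hmulint i)
          ((integrable_shiftedMax g hint).sub hgint)
          fun x => sum_mul_le_shiftedMax_sub g (hπnn x) (hπsum x) x
    _ = ∫ x, shiftedMax g x ∂α - ∑ i, g i * ∫ x, π x i ∂α := by
        rw [integral_sub (integrable_shiftedMax g hint) hgint,
          integral_finsetSum _ fun i _ => (hπint i).const_mul (g i)]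
        simp only [integral_const_mul]

end greedy

theorem stmt5_general (n : ℕ) (hn : 0 < n)
    (α : Measure (Fin n → ℝ)) [IsProbabilityMeasure α]
    (hint : ∀ i : Fin n, Integrable (fun x : Fin n → ℝ => x i) α)
    (g : Fin n → ℝ)
    (hties : ∀ i j : Fin n, i ≠ j → α {x | x i + g i = x j + g j} = 0)
    (L : Fin n → Set (Fin n → ℝ))
    (hL : ∀ i, L i = {x | ∀ k, x k + g k ≤ x i + g i})
    (p : Fin n → ℝ)
    (hLp : ∀ i, (α (L i)).toReal = p i)
    (π : (Fin n → ℝ) → Fin n → ℝ)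
    (hπmeas : ∀ i, Measurable (fun x => π x i))
    (hπnn : ∀ x i, 0 ≤ π x i)
    (hπsum : ∀ x, ∑ i, π x i = 1)
    (hπp : ∀ i, ∫ x, π x i ∂α = p i) :
    ∑ i, ∫ x in L i, x i ∂α ≥ ∑ i, ∫ x, x i * π x i ∂α := by
  have : Nonempty (Fin n) := Fin.pos_iff_nonempty.mp hn
  obtain rfl : L = laguerreCell g := funext hL
  calc ∑ i, ∫ x, x i * π x i ∂α
      ≤ ∫ x, shiftedMax g x ∂α - ∑ i, g i * ∫ x, π x i ∂α :=
        sum_integral_mul_le hint π hπmeas hπnn hπsum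
    _ = ∫ x, shiftedMax g x ∂α - ∑ i, g i * α.real (laguerreCell g i) := by
        simp only [hπp, measureReal_def, hLp]
    _ = ∑ i, ∫ x in laguerreCell g i, x i ∂α := (sum_setIntegral_laguerreCell hint hties).symm

/-- the shifted-greedy (Laguerre-cell) policy maximizes expected welfare
among all allocation policies satisfying the matching-distribution constraints. -/
theorem stmt5 (n : ℕ) (hn : 0 < n)
    (α : Measure (Fin n → ℝ)) [IsProbabilityMeasure α]
    (xbar : ℝ) (hsupp : α {x | ∃ i, x i ∉ Set.Icc (0:ℝ) xbar} = 0)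
    (hint : ∀ i : Fin n, Integrable (fun x : Fin n → ℝ => x i) α)
    (g : Fin n → ℝ)
    (hties : ∀ i j : Fin n, i ≠ j → α {x | x i + g i = x j + g j} = 0)
    (L : Fin n → Set (Fin n → ℝ))
    (hL : ∀ i, L i = {x | ∀ k, x k + g k ≤ x i + g i})
    (p : Fin n → ℝ) (hp : ∀ i, 0 < p i) (hpsum : ∑ i, p i = 1)
    (hLp : ∀ i, (α (L i)).toReal = p i)
    (π : (Fin n → ℝ) → Fin n → ℝ)
    (hπmeas : ∀ i, Measurable (fun x => π x i))
    (hπnn : ∀ x i, 0 ≤ π x i)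
    (hπsum : ∀ x, ∑ i, π x i = 1)
    (hπp : ∀ i, ∫ x, π x i ∂α = p i) :
    ∑ i, ∫ x in L i, x i ∂α ≥ ∑ i, ∫ x, x i * π x i ∂α :=
  stmt5_general n hn α hint g hties L hL p hLp π hπmeas hπnn hπsum hπp
end

section
/- For n = 2, let α be a probability measure on [0,1]² assigning zero mass to every line {x : x_2 = x_1 + t}. Fix t with α(Ω_B) = p* where Ω_B = {x ∈ [0,1]² : x_2 ≥ x_1 + t} and Ω_A = its complement. Then for any measurable map π: [0,1]² → {A,B} with α(π⁻¹(B)) = p*, we have ∫_{Ω_A} x_1 dα + ∫_{Ω_B} x_2 dα ≥ ∫_{π⁻¹(A)} x_1 dα + ∫_{π⁻¹(B)} x_2 dα. -/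
/-!
The matched weight of a partition with `B`-part `U` is `∫ x₁ dα + ∫_U (x₂ - x₁) dα`, so one
has to compare `∫_U f` for `f = x₂ - x₁` over sets `U` of mass `p`. `Ω_B` is a superlevel set of `f` at level `t`: exchanging `U \ Ω_B` (where `f ≤ t`)
for the equally heavy `Ω_B \ U` (where `f ≥ t`) can only increase the integral.
-/

open MeasureTheory

section

variable {X : Type*} [MeasurableSpace X] {μ : Measure X}

theorem Continuous.integrable_of_measure_compl_eq_zero [TopologicalSpace X] [T2Space X]
    [OpensMeasurableSpace X] [IsFiniteMeasureOnCompacts μ] {K : Set X} (hK : IsCompact K)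
    (hμK : μ Kᶜ = 0) {f : X → ℝ} (hf : Continuous f) : Integrable f μ := by
  rw [← Measure.restrict_eq_self_of_ae_mem (mem_ae_iff.mpr hμK)]
  exact hf.continuousOn.integrableOn_compact hK

theorem setIntegral_compl_add_setIntegral {g h : X → ℝ} (hg : Integrable g μ)
    (hh : Integrable h μ) {U : Set X} (hU : MeasurableSet U) :
    (∫ x in Uᶜ, g x ∂μ) + ∫ x in U, h x ∂μ = (∫ x, g x ∂μ) + ∫ x in U, (h x - g x) ∂μ := by
  rw [integral_sub hh.integrableOn hg.integrableOn, ← integral_add_compl hU hg]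
  ring

theorem setIntegral_le_setIntegral_of_nonneg_of_nonpos {g : X → ℝ} (hg : Integrable g μ)
    {S T : Set X} (hS : MeasurableSet S) (hT : MeasurableSet T)
    (hgS : ∀ x ∈ S, 0 ≤ g x) (hgSc : ∀ x ∉ S, g x ≤ 0) :
    ∫ x in T, g x ∂μ ≤ ∫ x in S, g x ∂μ := by
  have hTS : ∫ x in T \ S, g x ∂μ ≤ 0 := setIntegral_nonpos (hT.diff hS) fun x hx ↦ hgSc x hx.2
  have hST : 0 ≤ ∫ x in S \ T, g x ∂μ := setIntegral_nonneg (hS.diff hT) fun x hx ↦ hgS x hx.1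
  calc ∫ x in T, g x ∂μ = (∫ x in S ∩ T, g x ∂μ) + ∫ x in T \ S, g x ∂μ := by
        rw [Set.inter_comm, integral_inter_add_sdiff hS hg.integrableOn]
    _ ≤ (∫ x in S ∩ T, g x ∂μ) + ∫ x in S \ T, g x ∂μ := by linarith
    _ = ∫ x in S, g x ∂μ := integral_inter_add_sdiff hT hg.integrableOn

theorem setIntegral_le_setIntegral_of_superlevel [IsFiniteMeasure μ] {f : X → ℝ}
    (hf : Integrable f μ) {S T : Set X} (hS : MeasurableSet S) (hT : MeasurableSet T)
    (hST : μ S = μ T) {c : ℝ} (hfS : ∀ x ∈ S, c ≤ f x) (hfSc : ∀ x ∉ S, f x ≤ c) :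
    ∫ x in T, f x ∂μ ≤ ∫ x in S, f x ∂μ := by
  have hsub := setIntegral_le_setIntegral_of_nonneg_of_nonpos (μ := μ) (g := fun x ↦ f x - c)
    (hf.sub (integrable_const c)) hS hT (fun x hx ↦ sub_nonneg.mpr (hfS x hx))
    (fun x hx ↦ sub_nonpos.mpr (hfSc x hx))
  rwa [integral_sub hf.integrableOn (integrable_const c).integrableOn,
    integral_sub hf.integrableOn (integrable_const c).integrableOn, setIntegral_const,
    setIntegral_const, measureReal_def, measureReal_def, hST, sub_le_sub_iff_right] at hsub

end

theorem stmt7_general (α : Measure (ℝ × ℝ)) [IsProbabilityMeasure α]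
    (hsupp : α (Set.Icc ((0:ℝ), (0:ℝ)) (1, 1))ᶜ = 0)
    (t : ℝ) (p : ℝ)
    (ΩB : Set (ℝ × ℝ)) (hΩB : ΩB = {x : ℝ × ℝ | x.2 ≥ x.1 + t})
    (hΩBp : (α ΩB).toReal = p)
    (π : ℝ × ℝ → Bool) (hπ : Measurable π)
    (hπp : (α (π ⁻¹' {true})).toReal = p) :
    (∫ x in ΩBᶜ, x.1 ∂α) + (∫ x in ΩB, x.2 ∂α)
      ≥ (∫ x in π ⁻¹' {false}, x.1 ∂α) + (∫ x in π ⁻¹' {true}, x.2 ∂α) := by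
  subst hΩB
  have hint {f : ℝ × ℝ → ℝ} (hf : Continuous f) : Integrable f α :=
    hf.integrable_of_measure_compl_eq_zero isCompact_Icc hsupp
  have hΩBm : MeasurableSet {x : ℝ × ℝ | x.2 ≥ x.1 + t} :=
    measurableSet_le (by fun_prop) measurable_snd
  have hπm : MeasurableSet (π ⁻¹' {true}) := hπ (measurableSet_singleton true)
  have hfalse : π ⁻¹' {false} = (π ⁻¹' {true})ᶜ := by ext x; simp
  have hmass : α {x : ℝ × ℝ | x.2 ≥ x.1 + t} = α (π ⁻¹' {true}) :=
    (ENNReal.toReal_eq_toReal_iff' (measure_ne_top _ _) (measure_ne_top _ _)).mp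
      (hΩBp.trans hπp.symm)
  have hbathtub := setIntegral_le_setIntegral_of_superlevel (f := fun x ↦ x.2 - x.1) (c := t)
    (hint (by fun_prop)) hΩBm hπm hmass
    (fun x (hx : x.2 ≥ x.1 + t) ↦ by linarith) (fun x (hx : ¬x.2 ≥ x.1 + t) ↦ by linarith)
  rw [hfalse, ge_iff_le, setIntegral_compl_add_setIntegral (hint continuous_fst)
    (hint continuous_snd) hΩBm, setIntegral_compl_add_setIntegral (hint continuous_fst)
    (hint continuous_snd) hπm]
  linarith

/-- for two recipients, the slope-1 diagonal partition with the
prescribed mass above the line maximizes the matched weight among all measurable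
partitions with the same matching distribution. (`true` encodes recipient `B`.) -/
theorem stmt7 (α : Measure (ℝ × ℝ)) [IsProbabilityMeasure α]
    (hsupp : α (Set.Icc ((0:ℝ), (0:ℝ)) (1, 1))ᶜ = 0)
    (hlines : ∀ t : ℝ, α {x : ℝ × ℝ | x.2 = x.1 + t} = 0)
    (t : ℝ) (p : ℝ)
    (ΩB : Set (ℝ × ℝ)) (hΩB : ΩB = {x : ℝ × ℝ | x.2 ≥ x.1 + t})
    (hΩBp : (α ΩB).toReal = p)
    (π : ℝ × ℝ → Bool) (hπ : Measurable π)
    (hπp : (α (π ⁻¹' {true})).toReal = p) :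
    (∫ x in ΩBᶜ, x.1 ∂α) + (∫ x in ΩB, x.2 ∂α)
      ≥ (∫ x in π ⁻¹' {false}, x.1 ∂α) + (∫ x in π ⁻¹' {true}, x.2 ∂α) :=
  stmt7_general α hsupp t p ΩB hΩB hΩBp π hπ hπp
end
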